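/- arXiv:1905.13169 — 3 statements merged into one kernel-verified Lean document; each statement's English description precedes it below -/
import Mathlib

section
/- Let S : ℂ^{2n} → ℂ^{2n} be a linear symplectic operator. Then S is stable (i.e., the family of powers {S^n : n ≥ 1} is uniformly bounded in a neighborhood of 0) if and only if S is diagonalizable and all eigenvalues of S have absolute value 1. -/
open Complex

/-- Model of standard complex symplectic space ℂ^{2n}: pairs (p, q) with p, q ∈ ℂ^n. -/
abbrev SympC (n : ℕ) := (Fin n → ℂ) × (Fin n → ℂ)

/-- The standard symplectic bilinear form on ℂ^{2n}. -/
noncomputable def omegaStd {n : ℕ} (x y : SympC n) : ℂ :=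
  ∑ i, (x.1 i * y.2 i - x.2 i * y.1 i)

/-- Stability of a linear operator: powers uniformly bounded near 0. -/
def IsStableOp {n : ℕ} (S : Module.End ℂ (SympC n)) : Prop :=
  ∀ ε > (0 : ℝ), ∃ δ > (0 : ℝ), ∀ x : SympC n, ‖x‖ < δ →
    ∀ m : ℕ, 0 < m → ‖(S ^ m) x‖ < ε

/-!
A stable operator satisfies a uniform bound `‖S^m x‖ ≤ C ‖x‖`, which confines its eigenvalues to
the closed unit disc. Since `S` preserves the nondegenerate form `ω`, the inverse of an eigenvalue
is again an eigenvalue, so the spectrum lies on the unit circle. On a Jordan chain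
`S u = μ u + w`, `S w = μ w` with `|μ| = 1` the powers grow like `‖S^m u‖ ≥ m ‖w‖ - ‖u‖`, so
the bound leaves no room for nontrivial Jordan blocks. Conversely, in an eigenbasis the powers of
`S` multiply the (continuous) coordinates by unimodular scalars.
-/

noncomputable def omegaForm (n : ℕ) : LinearMap.BilinForm ℂ (SympC n) :=
  LinearMap.mk₂ ℂ omegaStd
    (fun _ _ _ => by
      simp only [omegaStd, ← Finset.sum_add_distrib]
      congr 1 with i; simp only [Prod.fst_add, Prod.snd_add, Pi.add_apply]; ring)
    (fun _ _ _ => by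
      simp only [omegaStd, smul_eq_mul, Finset.mul_sum]
      congr 1 with i; simp only [Prod.smul_fst, Prod.smul_snd, Pi.smul_apply, smul_eq_mul]; ring)
    (fun _ _ _ => by
      simp only [omegaStd, ← Finset.sum_add_distrib]
      congr 1 with i; simp only [Prod.fst_add, Prod.snd_add, Pi.add_apply]; ring)
    (fun _ _ _ => by
      simp only [omegaStd, smul_eq_mul, Finset.mul_sum]
      congr 1 with i; simp only [Prod.smul_fst, Prod.smul_snd, Pi.smul_apply, smul_eq_mul]; ring)

theorem omegaForm_apply {n : ℕ} (x y : SympC n) : omegaForm n x y = omegaStd x y := rfl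

theorem omegaForm_separatingLeft (n : ℕ) : (omegaForm n).SeparatingLeft := by
  intro x hx
  have hfst : ∀ i, x.1 i = 0 := fun i => by
    simpa [omegaForm_apply, omegaStd, Pi.single_apply] using hx (0, Pi.single i 1)
  have hsnd : ∀ i, x.2 i = 0 := fun i => by
    simpa [omegaForm_apply, omegaStd, Pi.single_apply] using hx (Pi.single i 1, 0)
  ext i
  exacts [hfst i, hsnd i]

theorem finrank_sympC (n : ℕ) : Module.finrank ℂ (SympC n) = 2 * n := by
  simp [Module.finrank_prod, two_mul]

namespace Module.End

section Orthogonal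

variable {K V : Type*} [Field K] [AddCommGroup V] [Module K V]
  {B : LinearMap.BilinForm K V} {f : End K V} {σ : K}

theorem HasEigenvalue.ne_zero_of_isOrthogonal (hB : B.SeparatingLeft) (hf : B.IsOrthogonal f)
    (hσ : f.HasEigenvalue σ) : σ ≠ 0 := by
  rintro rfl
  obtain ⟨v, hv⟩ := hσ.exists_hasEigenvector
  refine hv.2 (hB v fun y => ?_)
  rw [← hf v y, hv.apply_eq_smul, zero_smul, map_zero, LinearMap.zero_apply]

/-- For an eigenvector `v` of `σ`, the functional `B v` kills the range of `σ f - 1`. -/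
theorem HasEigenvalue.inv_of_isOrthogonal [FiniteDimensional K V] (hB : B.SeparatingLeft)
    (hf : B.IsOrthogonal f) (hσ : f.HasEigenvalue σ) : f.HasEigenvalue σ⁻¹ := by
  obtain ⟨v, hv⟩ := hσ.exists_hasEigenvector
  have hσ0 := hσ.ne_zero_of_isOrthogonal hB hf
  have hrange : ∀ y, B v ((σ • f - 1 : End K V) y) = 0 := fun y => by
    have := hf v y
    rw [hv.apply_eq_smul, LinearMap.map_smul₂, smul_eq_mul] at this
    simp [this]
  obtain ⟨y₀, hy₀⟩ : ∃ y₀, B v y₀ ≠ 0 := by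
    by_contra! h
    exact hv.2 (hB v h)
  have hnotinj : ¬ Function.Injective (σ • f - 1 : End K V) := fun hinj => by
    obtain ⟨z, rfl⟩ := LinearMap.injective_iff_surjective.mp hinj y₀
    exact hy₀ (hrange z)
  obtain ⟨w, hw, hw0⟩ := Submodule.exists_mem_ne_zero_of_ne_bot
    (mt LinearMap.ker_eq_bot.mp hnotinj)
  refine hasEigenvalue_of_hasEigenvector ⟨mem_eigenspace_iff.mpr ?_, hw0⟩
  have hσw : σ • f w = w := by simpa [sub_eq_zero] using hw
  exact ((inv_smul_eq_iff₀ hσ0).mpr hσw.symm).symm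

end Orthogonal

section PowerBound

variable {𝕜 E : Type*} [NormedField 𝕜] [NormedAddCommGroup E] [NormedSpace 𝕜 E]
  {f : End 𝕜 E} {C : ℝ} {σ : 𝕜}

theorem HasEigenvalue.norm_le_one_of_pow_bound (hC : ∀ m x, ‖(f ^ m) x‖ ≤ C * ‖x‖)
    (hσ : f.HasEigenvalue σ) : ‖σ‖ ≤ 1 := by
  obtain ⟨v, hv⟩ := hσ.exists_hasEigenvector
  have hv0 : 0 < ‖v‖ := norm_pos_iff.mpr hv.2
  have hpow : ∀ m : ℕ, ‖σ‖ ^ m ≤ C := fun m => by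
    have := hC m v
    rw [hv.pow_apply, norm_smul, norm_pow] at this
    exact le_of_mul_le_mul_right this hv0
  by_contra! h
  obtain ⟨m, hm⟩ := pow_unbounded_of_one_lt C h
  exact (hpow m).not_gt hm

theorem HasEigenvalue.norm_eq_one_of_pow_bound_of_isOrthogonal [FiniteDimensional 𝕜 E]
    {B : LinearMap.BilinForm 𝕜 E} (hB : B.SeparatingLeft) (hf : B.IsOrthogonal f)
    (hC : ∀ m x, ‖(f ^ m) x‖ ≤ C * ‖x‖) (hσ : f.HasEigenvalue σ) : ‖σ‖ = 1 := by
  have hσ0 := hσ.ne_zero_of_isOrthogonal hB hf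
  have hinv := (hσ.inv_of_isOrthogonal hB hf).norm_le_one_of_pow_bound hC
  rw [norm_inv, inv_le_one₀ (norm_pos_iff.mpr hσ0)] at hinv
  exact (hσ.norm_le_one_of_pow_bound hC).antisymm hinv

end PowerBound

section RCLike

variable {𝕜 E : Type*} [RCLike 𝕜] [NormedAddCommGroup E] [NormedSpace 𝕜 E]
  {f : End 𝕜 E} {C : ℝ} {μ : 𝕜}

/-- Along a Jordan chain `u ↦ w ↦ 0` with `‖μ‖ = 1` the powers grow linearly:
`μ f^m u = μ^(m+1) u + m μ^m w`. -/
theorem eq_zero_of_pow_bound_of_apply_eq_smul_add (hC : ∀ m x, ‖(f ^ m) x‖ ≤ C * ‖x‖)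
    (hμ : ‖μ‖ = 1) {u w : E} (hw : f w = μ • w) (hu : f u = μ • u + w) : w = 0 := by
  have hpow : ∀ m : ℕ, μ • (f ^ m) u = μ ^ (m + 1) • u + ((m : 𝕜) * μ ^ m) • w := by
    intro m
    induction m with
    | zero => simp
    | succ m ih =>
      rw [pow_succ', mul_apply, ← map_smul, ih, map_add, map_smul, map_smul, hu, hw]
      push_cast
      module
  have hgrowth : ∀ m : ℕ, m * ‖w‖ ≤ (C + 1) * ‖u‖ := fun m => calc
    (m : ℝ) * ‖w‖ = ‖((m : 𝕜) * μ ^ m) • w‖ := by simp [norm_smul, hμ]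
    _ = ‖μ • (f ^ m) u - μ ^ (m + 1) • u‖ := by rw [hpow, add_sub_cancel_left]
    _ ≤ ‖μ • (f ^ m) u‖ + ‖μ ^ (m + 1) • u‖ := norm_sub_le _ _
    _ = ‖(f ^ m) u‖ + ‖u‖ := by simp [norm_smul, hμ]
    _ ≤ (C + 1) * ‖u‖ := by linarith [hC m u]
  by_contra hw0
  obtain ⟨m, hm⟩ := exists_nat_gt ((C + 1) * ‖u‖ / ‖w‖)
  rw [div_lt_iff₀ (norm_pos_iff.mpr hw0)] at hm
  linarith [hgrowth m]

theorem maxGenEigenspace_eq_eigenspace_of_pow_bound (hC : ∀ m x, ‖(f ^ m) x‖ ≤ C * ‖x‖)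
    (hunit : ∀ σ, f.HasEigenvalue σ → ‖σ‖ = 1) (μ : 𝕜) :
    f.maxGenEigenspace μ = f.eigenspace μ := by
  set N := f - μ • 1
  have hN : ∀ v, N v = f v - μ • v := fun v => by simp [N]
  have hsq : ∀ v, N (N v) = 0 → N v = 0 := fun v hv => by
    by_contra hw0
    have hw : f (N v) = μ • N v := by rwa [hN (N v), sub_eq_zero] at hv
    have hμ := hunit μ (hasEigenvalue_of_hasEigenvector ⟨mem_eigenspace_iff.mpr hw, hw0⟩)
    exact hw0 (eq_zero_of_pow_bound_of_apply_eq_smul_add hC hμ hw (by rw [hN]; abel))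
  have hpow : ∀ k v, (N ^ k) v = 0 → N v = 0 := fun k => by
    induction k with
    | zero => intro v hv; simp_all
    | succ k ih => intro v hv; exact hsq v (ih (N v) (by rwa [pow_succ, mul_apply] at hv))
  refine le_antisymm (fun v hv => ?_) eigenspace_le_maxGenEigenspace
  obtain ⟨k, hk⟩ := (mem_maxGenEigenspace f μ v).mp hv
  rw [mem_eigenspace_iff, ← sub_eq_zero, ← hN]
  exact hpow k v hk

end RCLike

theorem exists_pow_bound_of_basis_apply_eq_smul {𝕜 E ι : Type*} [NontriviallyNormedField 𝕜]
    [CompleteSpace 𝕜] [NormedAddCommGroup E] [NormedSpace 𝕜 E] [Fintype ι] (b : Basis ι 𝕜 E)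
    {f : End 𝕜 E} {μ : ι → 𝕜} (hb : ∀ i, f (b i) = μ i • b i) (hμ : ∀ i, ‖μ i‖ ≤ 1) :
    ∃ C, ∀ m x, ‖(f ^ m) x‖ ≤ C * ‖x‖ := by
  set e := b.equivFunL
  refine ⟨‖(e.symm : (ι → 𝕜) →L[𝕜] E)‖ * ‖(e : E →L[𝕜] ι → 𝕜)‖, fun m x => ?_⟩
  have hdiag : (f ^ m) x = e.symm fun i => μ i ^ m * e x i := by
    have hbm : ∀ i, (f ^ m) (b i) = μ i ^ m • b i := fun i =>
      HasEigenvector.pow_apply ⟨mem_eigenspace_iff.mpr (hb i), b.ne_zero i⟩ m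
    conv_lhs => rw [← b.sum_equivFun x]
    change _ = b.equivFun.symm _
    simp only [map_sum, map_smul, hbm, smul_smul, b.equivFun_symm_apply, e,
      Basis.equivFunL_apply, Basis.equivFun_apply, mul_comm]
  have hcoord : ‖fun i => μ i ^ m * e x i‖ ≤ ‖e x‖ :=
    pi_norm_le_iff_of_nonneg (norm_nonneg _) |>.mpr fun i => by
      rw [norm_mul, norm_pow]
      exact mul_le_of_le_one_left (norm_nonneg _) (pow_le_one₀ (norm_nonneg _) (hμ i))
        |>.trans (norm_le_pi_norm (e x) i)
  calc ‖(f ^ m) x‖ ≤ ‖(e.symm : (ι → 𝕜) →L[𝕜] E)‖ * ‖fun i => μ i ^ m * e x i‖ := by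
        rw [hdiag]; exact (e.symm : (ι → 𝕜) →L[𝕜] E).le_opNorm _
    _ ≤ ‖(e.symm : (ι → 𝕜) →L[𝕜] E)‖ * (‖(e : E →L[𝕜] ι → 𝕜)‖ * ‖x‖) := by
        gcongr; exact hcoord.trans ((e : E →L[𝕜] ι → 𝕜).le_opNorm x)
    _ = _ := by ring

theorem exists_basis_fin_of_iSup_eigenspace_eq_top {K V : Type*} [Field K] [AddCommGroup V]
    [Module K V] [FiniteDimensional K V] {f : End K V} (hf : ⨆ μ, f.eigenspace μ = ⊤) {d : ℕ}
    (hd : finrank K V = d) :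
    ∃ (b : Basis (Fin d) K V) (μ : Fin d → K), ∀ i, f (b i) = μ i • b i := by
  classical
  have hint := DirectSum.isInternal_submodule_of_iSupIndep_of_iSup_eq_top
    f.eigenspaces_iSupIndep hf
  let c := hint.collectedBasis fun μ => Basis.ofVectorSpace K (f.eigenspace μ)
  let e := c.indexEquiv (finBasisOfFinrankEq K V hd)
  refine ⟨c.reindex e, fun i => (e.symm i).1, fun i => ?_⟩
  rw [Basis.reindex_apply]
  exact mem_eigenspace_iff.mp (hint.collectedBasis_mem _ _)

end Module.End

theorem isStableOp_iff_exists_pow_bound {n : ℕ} {S : Module.End ℂ (SympC n)} :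
    IsStableOp S ↔ ∃ C, ∀ m x, ‖(S ^ m) x‖ ≤ C * ‖x‖ := by
  constructor
  · intro hS
    obtain ⟨δ, hδ, hball⟩ := hS 1 one_pos
    refine ⟨max 1 (2 / δ), fun m x => ?_⟩
    rcases Nat.eq_zero_or_pos m with rfl | hm
    · simpa using le_mul_of_one_le_left (norm_nonneg x) (le_max_left 1 (2 / δ))
    refine (LinearMap.bound_of_shell (S ^ m) hδ (C := 2 / δ) (c := (2 : ℂ)) (by norm_num)
      (fun y hy hyδ => ?_) x).trans (by gcongr; exact le_max_right ..)
    rw [norm_ofNat, div_le_iff₀ two_pos] at hy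
    calc ‖(S ^ m) y‖ ≤ 1 := (hball y hyδ m hm).le
      _ ≤ 2 / δ * ‖y‖ := by rw [div_mul_eq_mul_div, le_div_iff₀ hδ]; linarith
  · rintro ⟨C, hC⟩ ε hε
    refine ⟨ε / (|C| + 1), by positivity, fun x hx m _ => ?_⟩
    calc ‖(S ^ m) x‖ ≤ (|C| + 1) * ‖x‖ := (hC m x).trans (by gcongr; linarith [le_abs_self C])
      _ < (|C| + 1) * (ε / (|C| + 1)) := by gcongr
      _ = ε := by field_simp

/-- a symplectic linear operator on ℂ^{2n} is stable iff it is
diagonalizable and all of its eigenvalues have absolute value 1. -/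
theorem symplectic_stable_iff_diagonalizable_unit_spectrum
    {n : ℕ} (S : Module.End ℂ (SympC n))
    (hsymp : ∀ x y, omegaStd (S x) (S y) = omegaStd x y) :
    IsStableOp S ↔
      ((∃ (b : Module.Basis (Fin (2 * n)) ℂ (SympC n)) (μ : Fin (2 * n) → ℂ),
          ∀ i, S (b i) = μ i • b i) ∧
        ∀ σ : ℂ, Module.End.HasEigenvalue S σ → ‖σ‖ = 1) := by
  rw [isStableOp_iff_exists_pow_bound]
  constructor
  · rintro ⟨C, hC⟩
    have hunit : ∀ σ, S.HasEigenvalue σ → ‖σ‖ = 1 := fun σ hσ =>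
      hσ.norm_eq_one_of_pow_bound_of_isOrthogonal (omegaForm_separatingLeft n) hsymp hC
    have hdiag : ⨆ μ, S.eigenspace μ = ⊤ := by
      simpa only [Module.End.maxGenEigenspace_eq_eigenspace_of_pow_bound hC hunit] using
        S.iSup_maxGenEigenspace_eq_top
    exact ⟨Module.End.exists_basis_fin_of_iSup_eigenspace_eq_top hdiag (finrank_sympC n), hunit⟩
  · rintro ⟨⟨b, μ, hb⟩, hunit⟩
    refine Module.End.exists_pow_bound_of_basis_apply_eq_smul b hb fun i => (hunit (μ i) ?_).le
    exact Module.End.hasEigenvalue_of_hasEigenvector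
      ⟨Module.End.mem_eigenspace_iff.mpr (hb i), b.ne_zero i⟩
end

section
/- Let S be a symplectic linear operator on ℂ^{2n} with an eigenvalue σ with Im σ ≠ 0 and |σ| = 1. Then the conjugate σ̄ is also an eigenvalue of S, and the sum of generalized eigenspaces L = S_σ ⊕ S_{σ̄} is a symplectic subspace (the restriction of the symplectic form to L is nondegenerate). -/
/-! If `S` preserves `ω`, `S u = α u` and `S v = β v`, then `ω u v = α β ω u v`; so eigenvectors
with `α β ≠ 1` are `ω`-orthogonal, and induction on the nilpotency orders of `S - α` and `S - β`
extends this to generalized eigenvectors. As `|σ| = 1` gives `σ σ̄ = 1`, the space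
`L = S_σ ⊕ S_σ̄` is `ω`-orthogonal to every other generalized eigenspace. These span `ℂ^{2n}`, so
a vector of `L` orthogonal to `L` is orthogonal to everything and hence zero. Since `S` is real,
conjugating an eigenvector for `σ` gives one for `σ̄`. -/

open Complex

/-- Componentwise complex conjugation (the real structure) on ℂ^{2n}. -/
def conjStd {n : ℕ} (x : SympC n) : SympC n :=
  (fun i => star (x.1 i), fun i => star (x.2 i))

namespace LinearMap.BilinForm

variable {K V : Type*} [Field K] [AddCommGroup V] [Module K V]
  {B : LinearMap.BilinForm K V} {S : Module.End K V}

theorem apply_eq_zero_of_pow_sub_smul_apply_eq_zero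
    (hS : ∀ x y, B (S x) (S y) = B x y) {α β : K} (hαβ : α * β ≠ 1) (k l : ℕ) {u v : V}
    (hu : ((S - α • 1) ^ k) u = 0) (hv : ((S - β • 1) ^ l) v = 0) : B u v = 0 := by
  induction k generalizing l u v with
  | zero => simp_all
  | succ k ihk =>
    induction l generalizing v with
    | zero => simp_all
    | succ l ihl =>
      set u' := (S - α • 1) u
      set v' := (S - β • 1) v
      have hu' : ((S - α • 1) ^ k) u' = 0 := by rwa [← Module.End.mul_apply, ← pow_succ]
      have hv' : ((S - β • 1) ^ l) v' = 0 := by rwa [← Module.End.mul_apply, ← pow_succ]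
      have key : B u v = α * β * B u v := calc
        B u v = B (α • u + u') (β • v + v') := by simp [u', v', ← hS u v]
        _ = α * β * B u v + α * B u v' + β * B u' v + B u' v' := by
          simp only [map_add, map_smul, LinearMap.add_apply, LinearMap.smul_apply, smul_eq_mul]
          ring
        _ = α * β * B u v := by rw [ihl hv', ihk _ hu' hv, ihk _ hu' hv']; ring
      have : (1 - α * β) * B u v = 0 := by linear_combination key
      exact (mul_eq_zero.mp this).resolve_left (sub_ne_zero.mpr hαβ.symm)

theorem apply_eq_zero_of_mem_maxGenEigenspace
    (hS : ∀ x y, B (S x) (S y) = B x y) {α β : K} (hαβ : α * β ≠ 1) {u v : V}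
    (hu : u ∈ S.maxGenEigenspace α) (hv : v ∈ S.maxGenEigenspace β) : B u v = 0 := by
  obtain ⟨k, hk⟩ := (S.mem_maxGenEigenspace α u).mp hu
  obtain ⟨l, hl⟩ := (S.mem_maxGenEigenspace β v).mp hv
  exact apply_eq_zero_of_pow_sub_smul_apply_eq_zero hS hαβ k l hk hl

theorem eq_zero_of_mem_maxGenEigenspace_sup_of_mul_eq_one [IsAlgClosed K] [FiniteDimensional K V]
    (hB : B.SeparatingLeft) (hS : ∀ x y, B (S x) (S y) = B x y) {α β : K} (hαβ : α * β = 1)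
    {x : V} (hx : x ∈ S.maxGenEigenspace α ⊔ S.maxGenEigenspace β)
    (hxL : ∀ y ∈ S.maxGenEigenspace α ⊔ S.maxGenEigenspace β, B x y = 0) : x = 0 := by
  refine hB x fun y ↦ ?_
  suffices ⊤ ≤ LinearMap.ker (B x) from this Submodule.mem_top
  rw [← S.iSup_maxGenEigenspace_eq_top]
  refine iSup_le fun τ z hz ↦ ?_
  by_cases hτ : τ = α ∨ τ = β
  · rcases hτ with rfl | rfl
    exacts [hxL z (Submodule.mem_sup_left hz), hxL z (Submodule.mem_sup_right hz)]
  obtain ⟨hτα, hτβ⟩ := not_or.mp hτ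
  have hατ : α * τ ≠ 1 := fun h ↦
    hτβ (mul_left_cancel₀ (left_ne_zero_of_mul_eq_one hαβ) (h.trans hαβ.symm))
  have hβτ : β * τ ≠ 1 := fun h ↦
    hτα (mul_left_cancel₀ (right_ne_zero_of_mul_eq_one hαβ)
      (h.trans ((mul_comm β α).trans hαβ).symm))
  have hL : S.maxGenEigenspace α ⊔ S.maxGenEigenspace β ≤ LinearMap.ker (B.flip z) :=
    sup_le (fun u hu ↦ apply_eq_zero_of_mem_maxGenEigenspace hS hατ hu hz)
      (fun u hu ↦ apply_eq_zero_of_mem_maxGenEigenspace hS hβτ hu hz)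
  exact hL hx

end LinearMap.BilinForm

noncomputable def omegaStdForm (n : ℕ) : LinearMap.BilinForm ℂ (SympC n) :=
  LinearMap.mk₂ ℂ omegaStd
    (fun _ _ _ ↦ by
      simp only [omegaStd, ← Finset.sum_add_distrib, Prod.fst_add, Prod.snd_add, Pi.add_apply]
      congr 1; ext; ring)
    (fun _ _ _ ↦ by
      simp only [omegaStd, Finset.mul_sum, Prod.smul_fst, Prod.smul_snd, Pi.smul_apply, smul_eq_mul]
      congr 1; ext; ring)
    (fun _ _ _ ↦ by
      simp only [omegaStd, ← Finset.sum_add_distrib, Prod.fst_add, Prod.snd_add, Pi.add_apply]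
      congr 1; ext; ring)
    (fun _ _ _ ↦ by
      simp only [omegaStd, Finset.mul_sum, Prod.smul_fst, Prod.smul_snd, Pi.smul_apply, smul_eq_mul]
      congr 1; ext; ring)

theorem omegaStdForm_apply {n : ℕ} (x y : SympC n) : omegaStdForm n x y = omegaStd x y := rfl

theorem omegaStdForm_separatingLeft (n : ℕ) : (omegaStdForm n).SeparatingLeft := by
  intro x hx
  ext i
  · simpa [omegaStdForm_apply, omegaStd, Pi.single_apply] using hx (0, Pi.single i 1)
  · simpa [omegaStdForm_apply, omegaStd, Pi.single_apply] using hx (Pi.single i 1, 0)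

theorem conjStd_smul {n : ℕ} (c : ℂ) (x : SympC n) :
    conjStd (c • x) = starRingEnd ℂ c • conjStd x := by
  ext <;> simp [conjStd]

theorem conjStd_conjStd {n : ℕ} (x : SympC n) : conjStd (conjStd x) = x := by
  ext <;> simp [conjStd]

theorem hasEigenvalue_conj_of_commute_conjStd {n : ℕ} {S : Module.End ℂ (SympC n)}
    (hS : ∀ x, S (conjStd x) = conjStd (S x)) {σ : ℂ} (hσ : S.HasEigenvalue σ) :
    S.HasEigenvalue (starRingEnd ℂ σ) := by
  obtain ⟨v, hv, hv0⟩ := hσ.exists_hasEigenvector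
  refine Module.End.hasEigenvalue_of_hasEigenvector (x := conjStd v) ⟨?_, ?_⟩
  · rw [Module.End.mem_eigenspace_iff, hS, Module.End.mem_eigenspace_iff.mp hv, conjStd_smul]
  · exact fun h ↦ hv0 (by rw [← conjStd_conjStd v, h]; ext <;> simp [conjStd])

theorem conjugate_eigenvalue_and_symplectic_subspace_general
    {n : ℕ} (S : Module.End ℂ (SympC n))
    (hsymp : ∀ x y, omegaStd (S x) (S y) = omegaStd x y)
    (hreal : ∀ x, S (conjStd x) = conjStd (S x))
    (σ : ℂ) (hσ : Module.End.HasEigenvalue S σ)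
    (habs : ‖σ‖ = 1) :
    Module.End.HasEigenvalue S (starRingEnd ℂ σ) ∧
    (∀ x ∈ S.maxGenEigenspace σ ⊔ S.maxGenEigenspace (starRingEnd ℂ σ),
      (∀ y ∈ S.maxGenEigenspace σ ⊔ S.maxGenEigenspace (starRingEnd ℂ σ),
        omegaStd x y = 0) → x = 0) := by
  have hσσ : σ * starRingEnd ℂ σ = 1 := by
    rw [Complex.mul_conj, Complex.normSq_eq_norm_sq, habs]; norm_num
  exact ⟨hasEigenvalue_conj_of_commute_conjStd hreal hσ, fun x hx hxL ↦
    (omegaStdForm n).eq_zero_of_mem_maxGenEigenspace_sup_of_mul_eq_one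
      (omegaStdForm_separatingLeft n) hsymp hσσ hx hxL⟩

/-- for a (real) symplectic operator S on ℂ^{2n} with a non-real
eigenvalue σ of modulus 1, the conjugate σ̄ is also an eigenvalue, and the sum of
the generalized eigenspaces L = S_σ ⊕ S_σ̄ is a symplectic subspace (the restriction
of ω to L is nondegenerate). -/
theorem conjugate_eigenvalue_and_symplectic_subspace
    {n : ℕ} (S : Module.End ℂ (SympC n))
    (hsymp : ∀ x y, omegaStd (S x) (S y) = omegaStd x y)
    (hreal : ∀ x, S (conjStd x) = conjStd (S x))
    (σ : ℂ) (hσ : Module.End.HasEigenvalue S σ)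
    (hIm : σ.im ≠ 0) (habs : ‖σ‖ = 1) :
    Module.End.HasEigenvalue S (starRingEnd ℂ σ) ∧
    (∀ x ∈ S.maxGenEigenspace σ ⊔ S.maxGenEigenspace (starRingEnd ℂ σ),
      (∀ y ∈ S.maxGenEigenspace σ ⊔ S.maxGenEigenspace (starRingEnd ℂ σ),
        omegaStd x y = 0) → x = 0) :=
  conjugate_eigenvalue_and_symplectic_subspace_general S hsymp hreal σ hσ habs
end

section
/- Let A be a stable symplectic operator on ℂ^{2n} all of whose eigenvalues lie on the unit circle, and suppose every eigenvalue is elliptic (the corresponding maximal invariant subspace is either positive or negative definite for the Hermitian form (1/(2i))ω(x, conj(x))). Then A has a unique positive Lagrangian invariant subspace, namely the direct sum of the eigenspaces that are positive. -/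
open Complex

/-- The Hermitian-type form h(x) = (1/(2i)) ω(x, conj x) (a real number). -/
noncomputable def hForm {n : ℕ} (x : SympC n) : ℝ :=
  ((1 / (2 * Complex.I)) * omegaStd x (conjStd x)).re

/-- A positive Lagrangian invariant subspace for an operator A. -/
noncomputable def IsPLI {n : ℕ} (A : Module.End ℂ (SympC n))
    (R : Submodule ℂ (SympC n)) : Prop :=
  Module.finrank ℂ R = n ∧
  (∀ x ∈ R, ∀ y ∈ R, omegaStd x y = 0) ∧
  (∀ x ∈ R, x ≠ 0 →
    (((1 / (2 * Complex.I)) * omegaStd x (conjStd x)).im = 0 ∧ 0 < hForm x)) ∧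
  R.map A = R
/-!
For a symplectic `A`, induction on nilpotency orders shows that `ω` pairs the generalized
eigenspaces `E σ` and `E τ` trivially unless `σ τ = 1`. Conjugation maps `E σ` into `E σ̄` and
reverses the sign of `h`, so a nonzero `h`-definite `E σ` has `σ σ̄ = 1`. Consequently the
positive eigenspaces are pairwise `ω`-orthogonal and `h`-orthogonal, so their sum `S` is isotropic
and `h`-positive, and conjugation exchanges `S` with the sum `T` of the negative eigenspaces.
As `ℂ^{2n} = S ⊕ T`, `dim S = n`. A positive invariant `R` is the sum of its intersections with
the `E σ`, and those with negative `σ` vanish; hence `R ≤ S`, with equality by dimension.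
-/

theorem Submodule.finrank_le_of_forall_star_mem {R M : Type*} [Field R] [StarRing R]
    [AddCommGroup M] [Module R M] [StarAddMonoid M] [StarModule R M] [FiniteDimensional R M]
    {p q : Submodule R M} (h : ∀ x ∈ p, star x ∈ q) :
    Module.finrank R p ≤ Module.finrank R q := by
  let j : p →+ q :=
    { toFun x := ⟨star x, h x x.2⟩
      map_zero' := by ext; simp
      map_add' x y := by ext; simp }
  refine Module.finrank_le_finrank_of_rank_le_rank ?_ (Module.rank_lt_aleph0 R q)
  simpa using rank_le_of_surjective_injective (starRingEnd R) j star_involutive.surjective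
    (fun x y hxy => by simpa [j] using congrArg Subtype.val hxy)
    (fun r x => by ext; simp [j, star_smul, starRingEnd_apply])

section Bilinear

variable {R M N : Type*} [CommRing R] [AddCommGroup M] [Module R M] [AddCommGroup N] [Module R N]

theorem LinearMap.apply_eq_zero_of_mem_maxGenEigenspace [IsDomain R] (B : M →ₗ[R] N →ₗ[R] R)
    {f : Module.End R M} {g : Module.End R N} (hB : ∀ x y, B (f x) (g y) = B x y)
    {σ τ : R} (hστ : σ * τ ≠ 1) {x : M} {y : N}
    (hx : x ∈ f.maxGenEigenspace σ) (hy : y ∈ g.maxGenEigenspace τ) : B x y = 0 := by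
  obtain ⟨k, hk⟩ := (Module.End.mem_maxGenEigenspace _ _ _).1 hx
  obtain ⟨l, hl⟩ := (Module.End.mem_maxGenEigenspace _ _ _).1 hy
  clear hx hy
  induction k generalizing x l y with
  | zero => simp_all
  | succ k ihk =>
    induction l generalizing y with
    | zero => simp_all
    | succ l ihl =>
      rw [pow_succ, Module.End.mul_apply] at hk hl
      set x' := (f - σ • 1) x
      set y' := (g - τ • 1) y
      have hfx : f x = σ • x + x' := by simp [x']
      have hgy : g y = τ • y + y' := by simp [y']
      have h := hB x y
      rw [hfx, hgy] at h
      -- `B x y = B (f x) (g y) = σ τ B x y`, the cross terms vanishing by induction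
      simp only [map_add, map_smul, LinearMap.add_apply, LinearMap.smul_apply, smul_eq_mul,
        ihk hk l hl, ihk hk (l + 1) (by rwa [pow_succ, Module.End.mul_apply]), ihl hl] at h
      have : (1 - σ * τ) * B x y = 0 := by linear_combination -h
      exact (mul_eq_zero.1 this).resolve_left (sub_ne_zero.2 (Ne.symm hστ))

theorem LinearMap.apply_eq_zero_of_mem_biSup {ι κ : Type*} (B : M →ₗ[R] N →ₗ[R] R)
    {s : Set ι} {t : Set κ} {p : ι → Submodule R M} {q : κ → Submodule R N}
    (h : ∀ i ∈ s, ∀ j ∈ t, ∀ x ∈ p i, ∀ y ∈ q j, B x y = 0) {x : M} {y : N}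
    (hx : x ∈ ⨆ i ∈ s, p i) (hy : y ∈ ⨆ j ∈ t, q j) : B x y = 0 := by
  have hq : ∀ i ∈ s, ∀ x ∈ p i, ⨆ j ∈ t, q j ≤ LinearMap.ker (B x) :=
    fun i hi x hx => iSup₂_le fun j hj y hy => h i hi j hj x hx y hy
  have hp : ⨆ i ∈ s, p i ≤ (⨆ j ∈ t, q j).dualAnnihilator.comap B :=
    iSup₂_le fun i hi x hx => (Submodule.mem_dualAnnihilator _).2 fun y hy => hq i hi x hx hy
  exact (Submodule.mem_dualAnnihilator _).1 (hp hx) y hy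

end Bilinear

namespace SympC

open Module.End

variable {n : ℕ}

noncomputable def omegaStdₗ (n : ℕ) : SympC n →ₗ[ℂ] SympC n →ₗ[ℂ] ℂ :=
  LinearMap.mk₂ ℂ omegaStd
    (fun x x' y => by simp only [omegaStd, ← Finset.sum_add_distrib]; congr 1; ext; simp; ring)
    (fun c x y => by simp only [omegaStd, smul_eq_mul, Finset.mul_sum]; congr 1; ext; simp; ring)
    (fun x y y' => by simp only [omegaStd, ← Finset.sum_add_distrib]; congr 1; ext; simp; ring)
    (fun c x y => by simp only [omegaStd, smul_eq_mul, Finset.mul_sum]; congr 1; ext; simp; ring)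

@[simp]
theorem omegaStdₗ_apply (x y : SympC n) : omegaStdₗ n x y = omegaStd x y := rfl

noncomputable def conjStdₗ (n : ℕ) : SympC n →ₗ⋆[ℂ] SympC n :=
  (starLinearEquiv ℂ : SympC n ≃ₗ⋆[ℂ] SympC n)

theorem conjStd_eq_star (x : SympC n) : conjStd x = star x := rfl

theorem conjStd_conjStd (x : SympC n) : conjStd (conjStd x) = x := star_star x

theorem conjStd_eq_zero {x : SympC n} : conjStd x = 0 ↔ x = 0 := star_eq_zero

theorem omegaStd_swap (x y : SympC n) : omegaStd y x = -omegaStd x y := by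
  simp only [omegaStd, ← Finset.sum_neg_distrib]; congr 1; ext; ring

theorem star_omegaStd (x y : SympC n) :
    star (omegaStd x y) = omegaStd (conjStd x) (conjStd y) := by
  simp [omegaStd, conjStd]

theorem eq_zero_of_forall_omegaStd_eq_zero {x : SympC n} (h : ∀ y, omegaStd x y = 0) :
    x = 0 := by
  ext i
  · simpa [omegaStd, Pi.single_apply] using h (0, Pi.single i 1)
  · simpa [omegaStd, Pi.single_apply] using h (Pi.single i 1, 0)

theorem finrank_eq_two_mul : Module.finrank ℂ (SympC n) = 2 * n := by
  simp [Module.finrank_prod, two_mul]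

theorem im_one_div_two_I_mul_omegaStd_conjStd (x : SympC n) :
    ((1 / (2 * Complex.I)) * omegaStd x (conjStd x)).im = 0 := by
  have hre : (omegaStd x (conjStd x)).re = 0 := by
    have h := congrArg Complex.re (star_omegaStd x (conjStd x))
    rw [conjStd_conjStd, omegaStd_swap x (conjStd x)] at h
    simp only [Complex.star_def, Complex.conj_re, Complex.neg_re] at h
    linarith
  simp [hre]

theorem hForm_conjStd (x : SympC n) : hForm (conjStd x) = -hForm x := by
  rw [hForm, hForm, conjStd_conjStd, omegaStd_swap, mul_neg, Complex.neg_re]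

theorem hForm_eq_zero_of_omegaStd_conjStd_eq_zero {x : SympC n}
    (h : omegaStd x (conjStd x) = 0) : hForm x = 0 := by
  simp [hForm, h]

theorem hForm_sum {ι : Type*} (s : Finset ι) (v : ι → SympC n)
    (h : ∀ i ∈ s, ∀ j ∈ s, i ≠ j → omegaStd (v i) (conjStd (v j)) = 0) :
    hForm (∑ i ∈ s, v i) = ∑ i ∈ s, hForm (v i) := by
  have hdiag : omegaStd (∑ i ∈ s, v i) (conjStd (∑ j ∈ s, v j))
      = ∑ i ∈ s, omegaStd (v i) (conjStd (v i)) := by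
    simp only [conjStd_eq_star, star_sum, ← omegaStdₗ_apply, map_sum, LinearMap.sum_apply]
    exact Finset.sum_congr rfl fun i hi =>
      Finset.sum_eq_single_of_mem i hi fun j hj hji => h j hj i hi hji
  simp only [hForm, hdiag, Finset.mul_sum, Complex.re_sum]

def IsSymplectic (A : Module.End ℂ (SympC n)) : Prop :=
  ∀ x y, omegaStd (A x) (A y) = omegaStd x y

def IsReal (A : Module.End ℂ (SympC n)) : Prop :=
  ∀ x, A (conjStd x) = conjStd (A x)

def IsElliptic (A : Module.End ℂ (SympC n)) : Prop :=
  ∀ σ : ℂ, A.HasEigenvalue σ →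
    ((∀ x ∈ A.maxGenEigenspace σ, x ≠ 0 → 0 < hForm x) ∨
     (∀ x ∈ A.maxGenEigenspace σ, x ≠ 0 → hForm x < 0))

/-- Every non-eigenvalue belongs to `posSpectrum A`, vacuously. -/
def posSpectrum (A : Module.End ℂ (SympC n)) : Set ℂ :=
  {σ | ∀ x ∈ A.maxGenEigenspace σ, x ≠ 0 → 0 < hForm x}

noncomputable def posPart (A : Module.End ℂ (SympC n)) : Submodule ℂ (SympC n) :=
  ⨆ σ ∈ posSpectrum A, A.maxGenEigenspace σ

noncomputable def negPart (A : Module.End ℂ (SympC n)) : Submodule ℂ (SympC n) :=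
  ⨆ (σ) (_ : σ ∉ posSpectrum A), A.maxGenEigenspace σ

variable {A : Module.End ℂ (SympC n)}

theorem maxGenEigenspace_le_posPart {σ : ℂ} (hσ : σ ∈ posSpectrum A) :
    A.maxGenEigenspace σ ≤ posPart A :=
  le_iSup₂ (f := fun σ (_ : σ ∈ posSpectrum A) => A.maxGenEigenspace σ) σ hσ

theorem maxGenEigenspace_le_negPart {σ : ℂ} (hσ : σ ∉ posSpectrum A) :
    A.maxGenEigenspace σ ≤ negPart A :=
  le_iSup₂ (f := fun σ (_ : σ ∉ posSpectrum A) => A.maxGenEigenspace σ) σ hσ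

theorem IsSymplectic.injective (hsymp : IsSymplectic A) : Function.Injective A :=
  (injective_iff_map_eq_zero A).2 fun x hx =>
    eq_zero_of_forall_omegaStd_eq_zero fun y => by rw [← hsymp x y, hx]; simp [omegaStd]

theorem IsSymplectic.omegaStd_eq_zero_of_mul_ne_one (hsymp : IsSymplectic A) {σ τ : ℂ}
    (hστ : σ * τ ≠ 1) {x y : SympC n} (hx : x ∈ A.maxGenEigenspace σ)
    (hy : y ∈ A.maxGenEigenspace τ) :
    omegaStd x y = 0 :=
  (omegaStdₗ n).apply_eq_zero_of_mem_maxGenEigenspace hsymp hστ hx hy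

theorem IsReal.conjStd_mem_maxGenEigenspace (hreal : IsReal A) {σ : ℂ} {x : SympC n}
    (hx : x ∈ A.maxGenEigenspace σ) : conjStd x ∈ A.maxGenEigenspace (star σ) := by
  have hpow : ∀ (k : ℕ) (y : SympC n),
      ((A - star σ • 1 : Module.End ℂ (SympC n)) ^ k) (conjStd y) =
        conjStd (((A - σ • 1 : Module.End ℂ (SympC n)) ^ k) y) := by
    intro k
    induction k with
    | zero => simp
    | succ k ih =>
      intro y
      have h₁ : (A - star σ • 1 : Module.End ℂ (SympC n)) (conjStd y) =
          conjStd ((A - σ • 1 : Module.End ℂ (SympC n)) y) := by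
        simp only [LinearMap.sub_apply, hreal y]
        simp [conjStd_eq_star, star_smul]
      simp only [pow_succ, Module.End.mul_apply, h₁, ih]
  obtain ⟨k, hk⟩ := (mem_maxGenEigenspace _ _ _).1 hx
  exact (mem_maxGenEigenspace _ _ _).2 ⟨k, by rw [hpow, hk, conjStd_eq_zero]⟩

theorem mul_star_eq_one_of_hForm_ne_zero (hsymp : IsSymplectic A) (hreal : IsReal A) {σ : ℂ}
    {x : SympC n} (hx : x ∈ A.maxGenEigenspace σ) (h : hForm x ≠ 0) : σ * star σ = 1 := by
  by_contra hσ
  exact h (hForm_eq_zero_of_omegaStd_conjStd_eq_zero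
    (hsymp.omegaStd_eq_zero_of_mul_ne_one hσ hx (hreal.conjStd_mem_maxGenEigenspace hx)))

theorem IsElliptic.hForm_neg (helliptic : IsElliptic A) {σ : ℂ} (hσ : σ ∉ posSpectrum A)
    {x : SympC n} (hx : x ∈ A.maxGenEigenspace σ) (hx0 : x ≠ 0) : hForm x < 0 := by
  have heig : A.HasEigenvalue σ :=
    (hasUnifEigenvalue_iff_hasUnifEigenvalue_one (k := ⊤) (by simp)).1
      ((Submodule.ne_bot_iff _).2 ⟨x, hx, hx0⟩)
  exact (helliptic σ heig).resolve_left hσ x hx hx0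

theorem star_notMem_posSpectrum (hreal : IsReal A) {σ : ℂ} (hσ : σ ∈ posSpectrum A)
    {x : SympC n} (hx : x ∈ A.maxGenEigenspace σ) (hx0 : x ≠ 0) :
    star σ ∉ posSpectrum A := fun hσ' => by
  have h := hσ' _ (hreal.conjStd_mem_maxGenEigenspace hx) (conjStd_eq_zero.not.2 hx0)
  linarith [hForm_conjStd x, hσ x hx hx0]

theorem star_mem_posSpectrum (hreal : IsReal A) (helliptic : IsElliptic A) {σ : ℂ}
    (hσ : σ ∉ posSpectrum A) : star σ ∈ posSpectrum A := by
  intro y hy hy0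
  have hy' : conjStd y ∈ A.maxGenEigenspace σ := by
    simpa using hreal.conjStd_mem_maxGenEigenspace hy
  have h := helliptic.hForm_neg hσ hy' (conjStd_eq_zero.not.2 hy0)
  linarith [hForm_conjStd y]

theorem omegaStd_eq_zero_of_mem_posSpectrum (hsymp : IsSymplectic A) (hreal : IsReal A)
    {σ τ : ℂ} (hσ : σ ∈ posSpectrum A) (hτ : τ ∈ posSpectrum A) {x y : SympC n}
    (hx : x ∈ A.maxGenEigenspace σ) (hy : y ∈ A.maxGenEigenspace τ) : omegaStd x y = 0 := by
  obtain rfl | hx0 := eq_or_ne x 0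
  · simp [omegaStd]
  have hσσ := mul_star_eq_one_of_hForm_ne_zero hsymp hreal hx (hσ x hx hx0).ne'
  refine hsymp.omegaStd_eq_zero_of_mul_ne_one (fun hστ => ?_) hx hy
  have : τ = star σ := mul_left_cancel₀ (left_ne_zero_of_mul_eq_one hσσ) (hστ.trans hσσ.symm)
  exact star_notMem_posSpectrum hreal hσ hx hx0 (this ▸ hτ)

theorem omegaStd_conjStd_eq_zero_of_mem_posSpectrum (hsymp : IsSymplectic A) (hreal : IsReal A)
    {σ τ : ℂ} (hστ : σ ≠ τ) (hτ : τ ∈ posSpectrum A) {x y : SympC n}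
    (hx : x ∈ A.maxGenEigenspace σ) (hy : y ∈ A.maxGenEigenspace τ) :
    omegaStd x (conjStd y) = 0 := by
  obtain rfl | hy0 := eq_or_ne y 0
  · simp [omegaStd, conjStd]
  have hττ := mul_star_eq_one_of_hForm_ne_zero hsymp hreal hy (hτ y hy hy0).ne'
  refine hsymp.omegaStd_eq_zero_of_mul_ne_one (fun hστ' => hστ ?_) hx
    (hreal.conjStd_mem_maxGenEigenspace hy)
  exact mul_right_cancel₀ (right_ne_zero_of_mul_eq_one hττ) (hστ'.trans hττ.symm)

theorem omegaStd_eq_zero_of_mem_posPart (hsymp : IsSymplectic A) (hreal : IsReal A)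
    {x y : SympC n} (hx : x ∈ posPart A) (hy : y ∈ posPart A) : omegaStd x y = 0 :=
  (omegaStdₗ n).apply_eq_zero_of_mem_biSup (fun _ hσ _ hτ _ hx _ hy =>
    omegaStd_eq_zero_of_mem_posSpectrum hsymp hreal hσ hτ hx hy) hx hy

theorem hForm_pos_of_mem_posPart (hsymp : IsSymplectic A) (hreal : IsReal A) {x : SympC n}
    (hx : x ∈ posPart A) (hx0 : x ≠ 0) : 0 < hForm x := by
  rw [posPart, iSup_subtype'] at hx
  obtain ⟨f, hf, rfl⟩ := (Submodule.mem_iSup_iff_exists_finsupp _ _).1 hx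
  rw [Finsupp.sum, hForm_sum _ _ fun σ _ τ _ hστ =>
    omegaStd_conjStd_eq_zero_of_mem_posSpectrum hsymp hreal (Subtype.val_injective.ne hστ)
      τ.2 (hf σ) (hf τ)]
  refine Finset.sum_pos (fun σ hσ => σ.2 _ (hf σ) (Finsupp.mem_support_iff.1 hσ)) ?_
  exact Finset.nonempty_iff_ne_empty.2 fun h => hx0 (by simp [Finsupp.sum, h])

theorem conjStd_mem_negPart (hreal : IsReal A) {x : SympC n} (hx : x ∈ posPart A) :
    conjStd x ∈ negPart A := by
  suffices posPart A ≤ (negPart A).comap (conjStdₗ n) from this hx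
  refine iSup₂_le fun σ hσ y hy => ?_
  obtain rfl | hy0 := eq_or_ne y 0
  · exact zero_mem _
  exact maxGenEigenspace_le_negPart (star_notMem_posSpectrum hreal hσ hy hy0)
    (hreal.conjStd_mem_maxGenEigenspace hy)

theorem conjStd_mem_posPart (hreal : IsReal A) (helliptic : IsElliptic A) {x : SympC n}
    (hx : x ∈ negPart A) : conjStd x ∈ posPart A := by
  suffices negPart A ≤ (posPart A).comap (conjStdₗ n) from this hx
  exact iSup₂_le fun σ hσ y hy => maxGenEigenspace_le_posPart
    (star_mem_posSpectrum hreal helliptic hσ) (hreal.conjStd_mem_maxGenEigenspace hy)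

theorem finrank_posPart (hreal : IsReal A) (helliptic : IsElliptic A) :
    Module.finrank ℂ (posPart A) = n := by
  have hle := Submodule.finrank_le_of_forall_star_mem fun x hx => conjStd_mem_negPart hreal hx
  have hge := Submodule.finrank_le_of_forall_star_mem fun x hx =>
    conjStd_mem_posPart hreal helliptic hx
  have hsup : posPart A ⊔ negPart A = ⊤ := by
    rw [posPart, negPart, ← iSup_split, iSup_maxGenEigenspace_eq_top]
  have hinf : posPart A ⊓ negPart A = ⊥ :=
    ((independent_maxGenEigenspace A).disjoint_biSup_biSup disjoint_compl_right).eq_bot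
  have hsum := Submodule.finrank_sup_add_finrank_inf_eq (posPart A) (negPart A)
  rw [hsup, hinf, finrank_top, finrank_bot, finrank_eq_two_mul] at hsum
  omega

theorem map_posPart (hsymp : IsSymplectic A) : (posPart A).map A = posPart A := by
  have hle : (posPart A).map A ≤ posPart A := Submodule.map_le_iff_le_comap.2 <|
    iSup₂_le fun σ hσ x hx =>
      maxGenEigenspace_le_posPart hσ (mapsTo_maxGenEigenspace_of_comm (Commute.refl A) σ hx)
  exact Submodule.eq_of_le_of_finrank_eq hle
    (Submodule.equivMapOfInjective A hsymp.injective _).finrank_eq.symm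

theorem isPLI_posPart (hsymp : IsSymplectic A) (hreal : IsReal A) (helliptic : IsElliptic A) :
    IsPLI A (posPart A) :=
  ⟨finrank_posPart hreal helliptic,
    fun _ hx _ hy => omegaStd_eq_zero_of_mem_posPart hsymp hreal hx hy,
    fun x hx hx0 => ⟨im_one_div_two_I_mul_omegaStd_conjStd x,
      hForm_pos_of_mem_posPart hsymp hreal hx hx0⟩,
    map_posPart hsymp⟩

theorem le_posPart (helliptic : IsElliptic A) {R : Submodule ℂ (SympC n)}
    (hinv : ∀ x ∈ R, A x ∈ R) (hpos : ∀ x ∈ R, x ≠ 0 → 0 < hForm x) : R ≤ posPart A := by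
  calc R = R ⊓ ⨆ σ, A.maxGenEigenspace σ := by rw [iSup_maxGenEigenspace_eq_top, inf_top_eq]
    _ = ⨆ σ, R ⊓ A.maxGenEigenspace σ := Submodule.inf_iSup_genEigenspace hinv ⊤
    _ ≤ posPart A := iSup_le fun σ => ?_
  by_cases hσ : σ ∈ posSpectrum A
  · exact inf_le_right.trans (maxGenEigenspace_le_posPart hσ)
  rintro x ⟨hxR, hxσ⟩
  obtain rfl | hx0 := eq_or_ne x 0
  · exact zero_mem _
  exact absurd (hpos x hxR hx0) (helliptic.hForm_neg hσ hxσ hx0).not_gt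

end SympC

theorem unique_PLI_of_elliptic_general
    {n : ℕ} (A : Module.End ℂ (SympC n))
    (hsymp : ∀ x y, omegaStd (A x) (A y) = omegaStd x y)
    (hreal : ∀ x, A (conjStd x) = conjStd (A x))
    (helliptic : ∀ σ : ℂ, Module.End.HasEigenvalue A σ →
      ((∀ x ∈ A.maxGenEigenspace σ, x ≠ 0 → 0 < hForm x) ∨
       (∀ x ∈ A.maxGenEigenspace σ, x ≠ 0 → hForm x < 0))) :
    IsPLI A (⨆ σ ∈ {σ : ℂ | ∀ x ∈ A.maxGenEigenspace σ, x ≠ 0 → 0 < hForm x},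
        A.maxGenEigenspace σ) ∧
    ∀ R : Submodule ℂ (SympC n), IsPLI A R →
      R = ⨆ σ ∈ {σ : ℂ | ∀ x ∈ A.maxGenEigenspace σ, x ≠ 0 → 0 < hForm x},
        A.maxGenEigenspace σ := by
  have hS := SympC.isPLI_posPart hsymp hreal helliptic
  refine ⟨hS, fun R ⟨hRn, _, hRpos, hRmap⟩ => Submodule.eq_of_le_of_finrank_eq ?_ ?_⟩
  · exact SympC.le_posPart helliptic (fun x hx => hRmap ▸ Submodule.mem_map_of_mem hx)
      fun x hx hx0 => (hRpos x hx hx0).2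
  · exact hRn.trans hS.1.symm

/-- a stable symplectic operator on ℂ^{2n}, all of whose eigenvalues
lie on the unit circle and are elliptic (each maximal invariant subspace is positive
or negative definite for h), has a unique positive Lagrangian invariant subspace,
namely the direct sum of the positive eigenspaces. -/
theorem unique_PLI_of_elliptic
    {n : ℕ} (A : Module.End ℂ (SympC n))
    (hsymp : ∀ x y, omegaStd (A x) (A y) = omegaStd x y)
    (hreal : ∀ x, A (conjStd x) = conjStd (A x))
    (hdiag : ∃ (b : Module.Basis (Fin (2 * n)) ℂ (SympC n)) (μ : Fin (2 * n) → ℂ),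
      ∀ i, A (b i) = μ i • b i)
    (hunit : ∀ σ : ℂ, Module.End.HasEigenvalue A σ → ‖σ‖ = 1)
    (helliptic : ∀ σ : ℂ, Module.End.HasEigenvalue A σ →
      ((∀ x ∈ A.maxGenEigenspace σ, x ≠ 0 → 0 < hForm x) ∨
       (∀ x ∈ A.maxGenEigenspace σ, x ≠ 0 → hForm x < 0))) :
    IsPLI A (⨆ σ ∈ {σ : ℂ | ∀ x ∈ A.maxGenEigenspace σ, x ≠ 0 → 0 < hForm x},
        A.maxGenEigenspace σ) ∧
    ∀ R : Submodule ℂ (SympC n), IsPLI A R →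
      R = ⨆ σ ∈ {σ : ℂ | ∀ x ∈ A.maxGenEigenspace σ, x ≠ 0 → 0 < hForm x},
        A.maxGenEigenspace σ :=
  unique_PLI_of_elliptic_general A hsymp hreal helliptic
end
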